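/- Let n ≥ 2, s > 0, and a > 1. Then for all i, k ∈ {1,…,n−1} with i ≠ k (so in particular n ≥ 3 for this part), ∫_{∂E_a} θ_i² θ_k² μ(dθ) = (1/3) J_2^{(1)}; and for every i ∈ {1,…,n−1}, a ∫_{∂E_a} θ_i² θ_n² μ(dθ) = J_1^{(1)} − ((n+1)/3) J_2^{(1)}. -/

import Mathlib

open MeasureTheory Finset Filter
open scoped BigOperators NNReal ENNReal FourierTransform

noncomputable section

/-- Finite difference of order `2m`:
`δ_m u(x,y) = ∑_{k=-m}^m (-1)^k binom(2m, m-k) u(x + k y)`. -/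
def finDiff (n m : ℕ) (u : EuclideanSpace ℝ (Fin n) → ℝ) (x y : EuclideanSpace ℝ (Fin n)) : ℝ :=
  ∑ k ∈ Finset.Icc (-(m : ℤ)) (m : ℤ),
    (-1 : ℝ) ^ k * (Nat.choose (2 * m) ((m : ℤ) - k).toNat : ℝ) * u (x + (k : ℝ) • y)

open Classical in
/-- The normalizing constant `c_{n,m,s}`. -/
def cnms (n m : ℕ) (s : ℝ) : ℝ :=
  if ∃ j : ℕ, s = (j : ℝ) then
    (4 : ℝ) ^ s * Real.Gamma ((n : ℝ) / 2 + s) * Real.Gamma (s + 1) /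
        (2 * Real.pi ^ ((n : ℝ) / 2)) *
      (∑ k ∈ Finset.Icc 2 m, (-1 : ℝ) ^ (k + 1 + ⌊s⌋₊) * (Nat.choose (2 * m) (m - k) : ℝ) *
          (k : ℝ) ^ (2 * s) * Real.log (k : ℝ))⁻¹
  else
    (4 : ℝ) ^ s * Real.Gamma ((n : ℝ) / 2 + s) /
        (Real.pi ^ ((n : ℝ) / 2) * Real.Gamma (-s)) *
      (∑ k ∈ Finset.Icc 1 m, (-1 : ℝ) ^ k * (Nat.choose (2 * m) (m - k) : ℝ) *
          (k : ℝ) ^ (2 * s))⁻¹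

/-- Pointwise hypersingular-integral realization `L_{m,s}` of the fractional
Laplacian `(-Δ)^s`. -/
def Lms (n m : ℕ) (s : ℝ) (u : EuclideanSpace ℝ (Fin n) → ℝ)
    (x : EuclideanSpace ℝ (Fin n)) : ℝ :=
  cnms n m s / 2 * ∫ y : EuclideanSpace ℝ (Fin n), finDiff n m u x y / ‖y‖ ^ ((n : ℝ) + 2 * s)

/-- `|x|_a² = ∑ aᵢ xᵢ²`. -/
def qa (n : ℕ) (a : Fin n → ℝ) (x : EuclideanSpace ℝ (Fin n)) : ℝ := ∑ i, a i * x i ^ 2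

/-- The open ellipsoid `E_a`. -/
def Ea (n : ℕ) (a : Fin n → ℝ) : Set (EuclideanSpace ℝ (Fin n)) := {x | qa n a x < 1}

/-- `u_β(x) = (1 - |x|_a²)₊^β`. -/
def uPow (n : ℕ) (a : Fin n → ℝ) (β : ℝ) (x : EuclideanSpace ℝ (Fin n)) : ℝ :=
  max 0 (1 - qa n a x) ^ β

/-- `⟨x, θ⟩_a = ∑ aᵢ xᵢ θᵢ`. -/
def aInner (n : ℕ) (a : Fin n → ℝ) (x θ : EuclideanSpace ℝ (Fin n)) : ℝ :=
  ∑ i, a i * x i * θ i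

/-- `Aθ` for `A = diag a`. -/
def Avec (n : ℕ) (a : Fin n → ℝ) (θ : EuclideanSpace ℝ (Fin n)) : EuclideanSpace ℝ (Fin n) :=
  (WithLp.equiv 2 (Fin n → ℝ)).symm fun i => a i * θ i

/-- `∫_{∂E_a} f dμ`, where `μ(dθ) = dθ / (|θ|^{n+2s} |Aθ|)` and `dθ` is the
`(n-1)`-dimensional Hausdorff (surface) measure on `∂E_a`. -/
def surfInt (n : ℕ) (s : ℝ) (a : Fin n → ℝ) (f : EuclideanSpace ℝ (Fin n) → ℝ) : ℝ :=
  ∫ θ in {θ : EuclideanSpace ℝ (Fin n) | qa n a θ = 1},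
    f θ / (‖θ‖ ^ ((n : ℝ) + 2 * s) * ‖Avec n a θ‖) ∂(μH[(n : ℝ) - 1])

/-- `k_{n,s} = 2^{2s-1} Γ(n/2+s) / π^{n/2}`. -/
def kns (n : ℕ) (s : ℝ) : ℝ :=
  (2 : ℝ) ^ (2 * s - 1) * Real.Gamma ((n : ℝ) / 2 + s) / Real.pi ^ ((n : ℝ) / 2)

/-- `J₀ = ∫_{∂E_a} μ(dθ)`. -/
def J0fun (n : ℕ) (s : ℝ) (a : Fin n → ℝ) : ℝ := surfInt n s a fun _ => 1

/-- `J_i^{(k)} = a_k^i ∫_{∂E_a} θ_k^{2i} μ(dθ)`. -/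
def Jik (n : ℕ) (s : ℝ) (a : Fin n → ℝ) (i : ℕ) (k : Fin n) : ℝ :=
  a k ^ i * surfInt n s a fun θ => θ k ^ (2 * i)

/-- Gauss hypergeometric function `₂F₁(α, β; γ; z)`. -/
def hyp2F1 (α β γ z : ℝ) : ℝ :=
  ∑' k : ℕ, (ascPochhammer ℝ k).eval α * (ascPochhammer ℝ k).eval β /
      ((ascPochhammer ℝ k).eval γ * (Nat.factorial k : ℝ)) * z ^ k

/-- The weight vector `(1, …, 1, a)`. -/
def avec (n : ℕ) (a : ℝ) : Fin n → ℝ := fun i => if (i : ℕ) = n - 1 then a else 1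

/-- Beta function `B(x,y) = Γ(x)Γ(y)/Γ(x+y)`. -/
def realBeta (x y : ℝ) : ℝ := Real.Gamma x * Real.Gamma y / Real.Gamma (x + y)

/-- Surface measure `ω_d = 2 π^{(d+1)/2} / Γ((d+1)/2)` of the unit `d`-sphere. -/
def sphVol (d : ℝ) : ℝ := 2 * Real.pi ^ ((d + 1) / 2) / Real.Gamma ((d + 1) / 2)

/-- Point inversion `σ(x) = c (x+ν)/|x+ν|² - ν`. -/
def ptInv (n : ℕ) (c : ℝ) (ν x : EuclideanSpace ℝ (Fin n)) : EuclideanSpace ℝ (Fin n) :=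
  (c / ‖x + ν‖ ^ 2) • (x + ν) - ν

/-- `Ω(a,c,ν) = σ(E_a)` (the set of `x ≠ -ν` with `σ(x) ∈ E_a`). -/
def Omg (n : ℕ) (c : ℝ) (ν : EuclideanSpace ℝ (Fin n)) (a : Fin n → ℝ) :
    Set (EuclideanSpace ℝ (Fin n)) :=
  {x | x ≠ -ν ∧ qa n a (ptInv n c ν x) < 1}

open Classical in
/-- The transformed torsion function `w_s(x) = |x+ν|^{2s-n} u_s(σ(x))`, extended by `0` at `-ν`. -/
def ws (n : ℕ) (s c : ℝ) (ν : EuclideanSpace ℝ (Fin n)) (a : Fin n → ℝ)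
    (x : EuclideanSpace ℝ (Fin n)) : ℝ :=
  if x = -ν then 0 else ‖x + ν‖ ^ (2 * s - (n : ℝ)) * uPow n a s (ptInv n c ν x)

/-- `(Ax)·y` for a general matrix `A`. -/
def qA (n : ℕ) (A : Matrix (Fin n) (Fin n) ℝ) (x y : EuclideanSpace ℝ (Fin n)) : ℝ :=
  ∑ i, ∑ j, A i j * x j * y i


/-! The measure `μ` on `∂E_a` is invariant under every linear isometry of `ℝⁿ` that preserves
`|·|_a` and `|A ·|`, in particular under reflections mixing two coordinates of equal weight.
Swapping two such coordinates, and reflecting `θᵢ ↦ (θᵢ ± θₖ)/√2`, gives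
`∫ θᵢ⁴ = ∫ θₖ⁴ = 3 ∫ θᵢ² θₖ²`. The second identity comes from integrating
`θᵢ² = ∑ⱼ aⱼ θⱼ² θᵢ²`, valid on `∂E_a`.

All integrals involved are genuine: `∂E_a` is a linear image of the unit sphere, which is
covered by the radial projections of the `2n` faces of a cube, so `∂E_a` has finite
`(n-1)`-dimensional Hausdorff measure, and the density of `μ` is continuous on it. -/

open Metric

theorem NormedSpace.lipschitzOnWith_normalize {E : Type*} [NormedAddCommGroup E]
    [NormedSpace ℝ E] : LipschitzOnWith 2 (normalize : E → E) {x | 1 ≤ ‖x‖} := by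
  refine LipschitzOnWith.of_dist_le_mul fun x (hx : 1 ≤ ‖x‖) y (hy : 1 ≤ ‖y‖) => ?_
  have hx0 : 0 < ‖x‖ := by linarith
  have hy0 : 0 < ‖y‖ := by linarith
  have split : normalize x - normalize y = ‖x‖⁻¹ • (x - y) + (‖x‖⁻¹ - ‖y‖⁻¹) • y := by
    simp only [normalize, smul_sub, sub_smul]; abel
  have hgap : |‖x‖⁻¹ - ‖y‖⁻¹| * ‖y‖ = |‖y‖ - ‖x‖| / ‖x‖ := by
    rw [inv_sub_inv hx0.ne' hy0.ne', abs_div, abs_of_pos (mul_pos hx0 hy0)]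
    field_simp
  rw [dist_eq_norm, dist_eq_norm, split]
  calc ‖‖x‖⁻¹ • (x - y) + (‖x‖⁻¹ - ‖y‖⁻¹) • y‖
      ≤ ‖x‖⁻¹ * ‖x - y‖ + |‖y‖ - ‖x‖| / ‖x‖ := by
        refine (norm_add_le _ _).trans_eq ?_
        rw [norm_smul, norm_smul, Real.norm_eq_abs, Real.norm_eq_abs, abs_inv, abs_norm, hgap]
    _ ≤ ‖x‖⁻¹ * ‖x - y‖ + ‖x - y‖ / ‖x‖ := by
        gcongr
        rw [abs_sub_comm]
        exact abs_norm_sub_norm_le x y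
    _ = 2 * ‖x - y‖ / ‖x‖ := by ring
    _ ≤ 2 * ‖x - y‖ := div_le_self (by positivity) hx

def insertCoord {m : ℕ} (j : Fin (m + 1)) (σ : ℝ) (y : EuclideanSpace ℝ (Fin m)) :
    EuclideanSpace ℝ (Fin (m + 1)) :=
  WithLp.toLp 2 (j.insertNth σ y.ofLp)

theorem isometry_insertCoord {m : ℕ} (j : Fin (m + 1)) (σ : ℝ) :
    Isometry (insertCoord j σ) := by
  refine Isometry.of_dist_eq fun y y' => ?_
  simp [EuclideanSpace.dist_eq, insertCoord, Fin.sum_univ_succAbove _ j]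

theorem norm_le_sqrt_of_forall_abs_le_one {m : ℕ} {y : EuclideanSpace ℝ (Fin m)}
    (hy : ∀ i, |y i| ≤ 1) : ‖y‖ ≤ √m := by
  rw [EuclideanSpace.norm_eq]
  refine Real.sqrt_le_sqrt ?_
  calc ∑ i, ‖y i‖ ^ 2 ≤ ∑ _i : Fin m, (1 : ℝ) := by
        gcongr with i
        rw [Real.norm_eq_abs, sq_abs]
        nlinarith [hy i, abs_nonneg (y i), sq_abs (y i)]
    _ = m := by simp

theorem sphere_subset_iUnion_normalize_image_insertCoord (m : ℕ) :
    sphere (0 : EuclideanSpace ℝ (Fin (m + 1))) 1 ⊆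
      ⋃ j, ⋃ σ ∈ ({-1, 1} : Set ℝ),
        NormedSpace.normalize '' (insertCoord j σ '' closedBall 0 √m) := by
  intro φ hφ
  rw [mem_sphere_zero_iff_norm] at hφ
  obtain ⟨j, -, hj⟩ := Finset.exists_max_image Finset.univ (fun i => |φ i|) Finset.univ_nonempty
  have hφj : 0 < |φ j| := by
    by_contra! h
    have h0 : ∀ i, φ i = 0 := fun i => abs_nonpos_iff.mp ((hj i (Finset.mem_univ _)).trans h)
    have : φ = 0 := by ext i; simp [h0 i]
    simp [this] at hφ
  set x := |φ j|⁻¹ • φ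
  have hxj : x j ∈ ({-1, 1} : Set ℝ) := by
    have := abs_pos.mp hφj
    rcases abs_choice (φ j) with h | h <;> simp [x, h, this]
  have hxφ : NormedSpace.normalize x = φ := by
    rw [NormedSpace.normalize_smul_of_pos (inv_pos.mpr hφj),
      NormedSpace.normalize_eq_self_of_norm_eq_one hφ]
  have hy : WithLp.toLp 2 (j.removeNth x.ofLp) ∈ closedBall (0 : EuclideanSpace ℝ (Fin m)) √m := by
    refine mem_closedBall_zero_iff.mpr (norm_le_sqrt_of_forall_abs_le_one fun i => ?_)
    simp only [Fin.removeNth, x, PiLp.smul_apply, smul_eq_mul, abs_mul, abs_inv, abs_abs]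
    exact inv_mul_le_one_of_le₀ (hj _ (Finset.mem_univ _)) hφj.le
  refine Set.mem_iUnion.mpr ⟨j, Set.mem_biUnion hxj ⟨x, ⟨_, hy, ?_⟩, hxφ⟩⟩
  exact congrArg (WithLp.toLp 2) (Fin.insertNth_self_removeNth j x.ofLp)

theorem hausdorffMeasure_closedBall_lt_top (m : ℕ) (r : ℝ) :
    μH[m] (closedBall (0 : EuclideanSpace ℝ (Fin m)) r) < ⊤ := by
  have : ((Module.finrank ℝ (EuclideanSpace ℝ (Fin m)) : ℕ) : ℝ) = m := by simp
  rw [← this]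
  exact (isCompact_closedBall _ _).measure_lt_top

theorem hausdorffMeasure_sphere_lt_top (m : ℕ) :
    μH[m] (sphere (0 : EuclideanSpace ℝ (Fin (m + 1))) 1) < ⊤ := by
  refine (measure_mono (sphere_subset_iUnion_normalize_image_insertCoord m)).trans_lt ?_
  refine (measure_iUnion_le _).trans_lt ?_
  rw [tsum_fintype]
  refine ENNReal.sum_lt_top.mpr fun j _ => measure_biUnion_lt_top (by simp) fun σ hσ => ?_
  have hface : insertCoord j σ '' closedBall 0 √m ⊆ {x | 1 ≤ ‖x‖} := by
    rintro _ ⟨y, -, rfl⟩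
    have := PiLp.norm_apply_le (insertCoord j σ y) j
    rcases hσ with rfl | rfl <;> simpa [insertCoord] using this
  calc μH[m] (NormedSpace.normalize '' (insertCoord j σ '' closedBall 0 √m))
      ≤ 2 ^ (m : ℝ) * μH[m] (insertCoord j σ '' closedBall 0 √m) :=
        (NormedSpace.lipschitzOnWith_normalize.mono hface).hausdorffMeasure_image_le
          (Nat.cast_nonneg m)
    _ = 2 ^ (m : ℝ) * μH[m] (closedBall (0 : EuclideanSpace ℝ (Fin m)) √m) := by
        rw [(isometry_insertCoord j σ).hausdorffMeasure_image (Or.inl (Nat.cast_nonneg m))]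
    _ < ⊤ := ENNReal.mul_lt_top (by simp) (hausdorffMeasure_closedBall_lt_top m _)

section Ellipsoid

variable {n : ℕ} {b : Fin n → ℝ}

def diagInvSqrt (b : Fin n → ℝ) : EuclideanSpace ℝ (Fin n) →L[ℝ] EuclideanSpace ℝ (Fin n) :=
  Matrix.toEuclideanCLM (n := Fin n) (𝕜 := ℝ) (Matrix.diagonal fun i => (√(b i))⁻¹)

theorem diagInvSqrt_apply (φ : EuclideanSpace ℝ (Fin n)) (i : Fin n) :
    diagInvSqrt b φ i = (√(b i))⁻¹ * φ i := by
  simp [diagInvSqrt, Matrix.mulVec_diagonal]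

theorem qa_diagInvSqrt (hb : ∀ i, 0 < b i) (φ : EuclideanSpace ℝ (Fin n)) :
    qa n b (diagInvSqrt b φ) = ‖φ‖ ^ 2 := by
  rw [EuclideanSpace.norm_sq_eq, qa]
  refine Finset.sum_congr rfl fun i _ => ?_
  rw [diagInvSqrt_apply, mul_pow, inv_pow, Real.sq_sqrt (hb i).le, Real.norm_eq_abs, sq_abs,
    mul_inv_cancel_left₀ (hb i).ne']

theorem setOf_qa_eq_one_eq_image_sphere (hb : ∀ i, 0 < b i) :
    {θ | qa n b θ = 1} = diagInvSqrt b '' sphere 0 1 := by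
  ext θ
  constructor
  · intro hθ
    set φ : EuclideanSpace ℝ (Fin n) := WithLp.toLp 2 fun i => √(b i) * θ i
    have hφθ : diagInvSqrt b φ = θ := by
      ext i
      rw [diagInvSqrt_apply]
      simp [φ, (Real.sqrt_pos.mpr (hb i)).ne']
    refine ⟨φ, ?_, hφθ⟩
    have : ‖φ‖ ^ 2 = 1 := by rw [← qa_diagInvSqrt hb, hφθ]; exact hθ
    rw [mem_sphere_zero_iff_norm]
    exact (pow_eq_one_iff_of_nonneg (norm_nonneg φ) two_ne_zero).mp this
  · rintro ⟨φ, hφ, rfl⟩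
    rw [Set.mem_ofPred_eq, qa_diagInvSqrt hb, mem_sphere_zero_iff_norm.mp hφ, one_pow]

theorem isCompact_setOf_qa_eq_one (hb : ∀ i, 0 < b i) : IsCompact {θ | qa n b θ = 1} := by
  rw [setOf_qa_eq_one_eq_image_sphere hb]
  exact (isCompact_sphere 0 1).image (diagInvSqrt b).continuous

theorem hausdorffMeasure_setOf_qa_eq_one_lt_top (hb : ∀ i, 0 < b i) :
    μH[(n : ℝ) - 1] {θ | qa n b θ = 1} < ⊤ := by
  cases n with
  | zero => simp [qa]
  | succ m =>
    rw [setOf_qa_eq_one_eq_image_sphere hb, Nat.cast_succ, add_sub_cancel_right]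
    exact ((diagInvSqrt b).lipschitz.hausdorffMeasure_image_le (Nat.cast_nonneg m) _).trans_lt
      (ENNReal.mul_lt_top (by simp) (hausdorffMeasure_sphere_lt_top m))

end Ellipsoid

section SurfaceIntegral

variable {n : ℕ} {s : ℝ} {b : Fin n → ℝ}

theorem continuous_Avec : Continuous (Avec n b) :=
  (PiLp.continuous_toLp 2 _).comp
    (continuous_pi fun i => continuous_const.mul (PiLp.continuous_apply 2 _ i))

theorem Avec_apply (θ : EuclideanSpace ℝ (Fin n)) (i : Fin n) : Avec n b θ i = b i * θ i := rfl

theorem ne_zero_of_qa_eq_one {θ : EuclideanSpace ℝ (Fin n)} (hθ : qa n b θ = 1) : θ ≠ 0 := by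
  rintro rfl
  simp [qa] at hθ

theorem Avec_ne_zero (hb : ∀ i, b i ≠ 0) {θ : EuclideanSpace ℝ (Fin n)} (hθ : θ ≠ 0) :
    Avec n b θ ≠ 0 := by
  contrapose! hθ
  ext i
  have := congrArg (· i) hθ
  simp only [Avec_apply, PiLp.zero_apply, mul_eq_zero] at this
  simpa [hb i] using this

theorem integrableOn_surfInt_integrand (hb : ∀ i, 0 < b i) {f : EuclideanSpace ℝ (Fin n) → ℝ}
    (hf : Continuous f) :
    IntegrableOn (fun θ => f θ / (‖θ‖ ^ ((n : ℝ) + 2 * s) * ‖Avec n b θ‖))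
      {θ | qa n b θ = 1} μH[(n : ℝ) - 1] := by
  have hK := isCompact_setOf_qa_eq_one hb
  refine ContinuousOn.integrableOn_of_subset_isCompact ?_ hK hK.measurableSet subset_rfl
    (hausdorffMeasure_setOf_qa_eq_one_lt_top hb).ne
  refine hf.continuousOn.div ((continuous_norm.continuousOn.rpow_const fun θ hθ => ?_).mul
    (continuous_Avec.norm.continuousOn)) fun θ hθ => ?_
  · exact Or.inl (norm_ne_zero_iff.mpr (ne_zero_of_qa_eq_one hθ))
  · have h0 := ne_zero_of_qa_eq_one hθ
    exact mul_ne_zero (Real.rpow_pos_of_pos (norm_pos_iff.mpr h0) _).ne'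
      (norm_ne_zero_iff.mpr (Avec_ne_zero (fun i => (hb i).ne') h0))

theorem measurableSet_setOf_qa_eq_one :
    MeasurableSet {θ : EuclideanSpace ℝ (Fin n) | qa n b θ = 1} :=
  (isClosed_eq (by unfold qa; fun_prop) continuous_const).measurableSet

theorem surfInt_const_mul (c : ℝ) (f : EuclideanSpace ℝ (Fin n) → ℝ) :
    surfInt n s b (fun θ => c * f θ) = c * surfInt n s b f := by
  simp only [surfInt, mul_div_assoc, integral_const_mul]

theorem surfInt_add (hb : ∀ i, 0 < b i) {f g : EuclideanSpace ℝ (Fin n) → ℝ}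
    (hf : Continuous f) (hg : Continuous g) :
    surfInt n s b (fun θ => f θ + g θ) = surfInt n s b f + surfInt n s b g := by
  simp only [surfInt, add_div]
  exact integral_add (integrableOn_surfInt_integrand hb hf)
    (integrableOn_surfInt_integrand hb hg)

theorem surfInt_sum {ι : Type*} (t : Finset ι) (hb : ∀ i, 0 < b i)
    {f : ι → EuclideanSpace ℝ (Fin n) → ℝ} (hf : ∀ j ∈ t, Continuous (f j)) :
    surfInt n s b (fun θ => ∑ j ∈ t, f j θ) = ∑ j ∈ t, surfInt n s b (f j) := by
  simp only [surfInt, Finset.sum_div]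
  exact integral_finsetSum t fun j hj => integrableOn_surfInt_integrand hb (hf j hj)

theorem surfInt_congr {f g : EuclideanSpace ℝ (Fin n) → ℝ}
    (h : ∀ θ, qa n b θ = 1 → f θ = g θ) : surfInt n s b f = surfInt n s b g :=
  setIntegral_congr_fun measurableSet_setOf_qa_eq_one fun θ hθ => by simp only [h θ hθ]

theorem surfInt_comp_linearIsometryEquiv
    (T : EuclideanSpace ℝ (Fin n) ≃ₗᵢ[ℝ] EuclideanSpace ℝ (Fin n))
    (hq : ∀ θ, qa n b (T θ) = qa n b θ) (hA : ∀ θ, ‖Avec n b (T θ)‖ = ‖Avec n b θ‖)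
    (f : EuclideanSpace ℝ (Fin n) → ℝ) :
    surfInt n s b (fun θ => f (T θ)) = surfInt n s b f := by
  have hpre : T ⁻¹' {θ | qa n b θ = 1} = {θ | qa n b θ = 1} := by ext θ; simp [hq]
  conv_rhs => rw [surfInt, ← (T.toIsometryEquiv.measurePreserving_hausdorffMeasure _)
    |>.setIntegral_preimage_emb T.toHomeomorph.measurableEmbedding]
  simp only [LinearIsometryEquiv.coe_toIsometryEquiv, hpre, surfInt, LinearIsometryEquiv.norm_map,
    hA]

end SurfaceIntegral

section Reflection

variable {n : ℕ} {i k : Fin n} {p q : ℝ}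

def reflectCoords (i k : Fin n) (p q : ℝ) (θ : EuclideanSpace ℝ (Fin n)) :
    EuclideanSpace ℝ (Fin n) :=
  WithLp.toLp 2 fun j =>
    if j = i then p * θ i + q * θ k else if j = k then q * θ i - p * θ k else θ j

theorem reflectCoords_apply_left (θ : EuclideanSpace ℝ (Fin n)) :
    reflectCoords i k p q θ i = p * θ i + q * θ k := by
  simp [reflectCoords]

theorem reflectCoords_apply_right (hik : i ≠ k) (θ : EuclideanSpace ℝ (Fin n)) :
    reflectCoords i k p q θ k = q * θ i - p * θ k := by
  simp [reflectCoords, hik.symm]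

theorem reflectCoords_apply_of_ne {j : Fin n} (hji : j ≠ i) (hjk : j ≠ k)
    (θ : EuclideanSpace ℝ (Fin n)) : reflectCoords i k p q θ j = θ j := by
  simp [reflectCoords, hji, hjk]

theorem reflectCoords_involutive (hik : i ≠ k) (hpq : p ^ 2 + q ^ 2 = 1) :
    Function.Involutive (reflectCoords i k p q) := by
  intro θ
  ext j
  by_cases hji : j = i
  · subst hji
    rw [reflectCoords_apply_left, reflectCoords_apply_left, reflectCoords_apply_right hik]
    linear_combination θ j * hpq
  by_cases hjk : j = k
  · subst hjk
    rw [reflectCoords_apply_right hik, reflectCoords_apply_left, reflectCoords_apply_right hik]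
    linear_combination θ j * hpq
  rw [reflectCoords_apply_of_ne hji hjk, reflectCoords_apply_of_ne hji hjk]

theorem sum_mul_sq_reflectCoords (hik : i ≠ k) (hpq : p ^ 2 + q ^ 2 = 1) {c : Fin n → ℝ}
    (hc : c i = c k) (θ : EuclideanSpace ℝ (Fin n)) :
    ∑ j, c j * reflectCoords i k p q θ j ^ 2 = ∑ j, c j * θ j ^ 2 := by
  have hk : k ∈ Finset.univ.erase i := Finset.mem_erase.mpr ⟨hik.symm, Finset.mem_univ k⟩
  simp only [← Finset.add_sum_erase _ _ (Finset.mem_univ i), ← Finset.add_sum_erase _ _ hk]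
  have hrest : ∑ j ∈ (Finset.univ.erase i).erase k, c j * reflectCoords i k p q θ j ^ 2 =
      ∑ j ∈ (Finset.univ.erase i).erase k, c j * θ j ^ 2 :=
    Finset.sum_congr rfl fun j hj => by
      obtain ⟨hjk, hji, -⟩ := Finset.mem_erase.mp hj |>.imp_right Finset.mem_erase.mp
      rw [reflectCoords_apply_of_ne hji hjk]
  rw [hrest, reflectCoords_apply_left, reflectCoords_apply_right hik, hc]
  linear_combination (θ i ^ 2 + θ k ^ 2) * c k * hpq

def reflectCoordsEquiv (hik : i ≠ k) (hpq : p ^ 2 + q ^ 2 = 1) :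
    EuclideanSpace ℝ (Fin n) ≃ₗᵢ[ℝ] EuclideanSpace ℝ (Fin n) where
  toFun := reflectCoords i k p q
  invFun := reflectCoords i k p q
  map_add' θ θ' := by ext j; simp only [reflectCoords, PiLp.add_apply]; split_ifs <;> ring
  map_smul' c θ := by
    ext j; simp only [reflectCoords, PiLp.smul_apply, smul_eq_mul, RingHom.id_apply]
    split_ifs <;> ring
  left_inv := reflectCoords_involutive hik hpq
  right_inv := reflectCoords_involutive hik hpq
  norm_map' θ := by
    change ‖reflectCoords i k p q θ‖ = ‖θ‖
    have := sum_mul_sq_reflectCoords hik hpq (c := 1) rfl θ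
    simp only [Pi.one_apply, one_mul] at this
    simp [EuclideanSpace.norm_eq, this]

theorem reflectCoordsEquiv_apply (hik : i ≠ k) (hpq : p ^ 2 + q ^ 2 = 1)
    (θ : EuclideanSpace ℝ (Fin n)) : reflectCoordsEquiv hik hpq θ = reflectCoords i k p q θ :=
  rfl

end Reflection

section Moments

variable {n : ℕ} {s : ℝ} {b : Fin n → ℝ} {i k : Fin n}

theorem surfInt_comp_reflectCoords {p q : ℝ} (hik : i ≠ k) (hpq : p ^ 2 + q ^ 2 = 1)
    (hb : b i = b k) (f : EuclideanSpace ℝ (Fin n) → ℝ) :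
    surfInt n s b (fun θ => f (reflectCoords i k p q θ)) = surfInt n s b f := by
  refine surfInt_comp_linearIsometryEquiv (reflectCoordsEquiv hik hpq)
    (sum_mul_sq_reflectCoords hik hpq hb) (fun θ => ?_) f
  have := sum_mul_sq_reflectCoords hik hpq (c := fun j => b j ^ 2) (by simp only [hb]) θ
  simp only [reflectCoordsEquiv_apply, EuclideanSpace.norm_eq, Avec_apply, Real.norm_eq_abs,
    sq_abs, mul_pow, this]

theorem surfInt_comp_apply_eq_of_eq (hb : b i = b k) (g : ℝ → ℝ) :
    surfInt n s b (fun θ => g (θ i)) = surfInt n s b (fun θ => g (θ k)) := by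
  by_cases hik : i = k
  · rw [hik]
  rw [← surfInt_comp_reflectCoords (p := 0) (q := 1) hik (by norm_num) hb]
  simp only [reflectCoords_apply_left, zero_mul, one_mul, zero_add]

/-- The reflection `(θᵢ, θₖ) ↦ ((θᵢ + θₖ)/√2, (θᵢ - θₖ)/√2)` carries `θᵢ⁴ + θₖ⁴` to
`(θᵢ⁴ + 6 θᵢ² θₖ² + θₖ⁴)/2`, the odd mixed terms cancelling. -/
theorem surfInt_sq_mul_sq_of_eq (hb0 : ∀ j, 0 < b j) (hik : i ≠ k) (hb : b i = b k) :
    surfInt n s b (fun θ => θ i ^ 2 * θ k ^ 2) = 1 / 3 * surfInt n s b (fun θ => θ i ^ 4) := by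
  obtain ⟨c, hc⟩ : ∃ c : ℝ, c ^ 2 = 1 / 2 := ⟨√(1 / 2), Real.sq_sqrt (by norm_num)⟩
  have hpq : c ^ 2 + c ^ 2 = 1 := by rw [hc]; norm_num
  have hplus := surfInt_comp_reflectCoords (s := s) hik hpq hb (fun θ => θ i ^ 4)
  have hminus := surfInt_comp_reflectCoords (s := s) hik hpq hb (fun θ => θ k ^ 4)
  simp only [reflectCoords_apply_left, reflectCoords_apply_right hik] at hplus hminus
  have hswap := surfInt_comp_apply_eq_of_eq (s := s) hb (· ^ 4)
  have hsum : surfInt n s b (fun θ => (c * θ i + c * θ k) ^ 4 + (c * θ i - c * θ k) ^ 4) =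
      1 / 2 * surfInt n s b (fun θ => θ i ^ 4) + 1 / 2 * surfInt n s b (fun θ => θ k ^ 4)
        + 3 * surfInt n s b (fun θ => θ i ^ 2 * θ k ^ 2) := by
    rw [← surfInt_const_mul, ← surfInt_const_mul, ← surfInt_const_mul,
      ← surfInt_add hb0 (by fun_prop) (by fun_prop),
      ← surfInt_add hb0 (by fun_prop) (by fun_prop)]
    refine surfInt_congr fun θ _ => ?_
    linear_combination
      (2 * θ i ^ 4 + 12 * θ i ^ 2 * θ k ^ 2 + 2 * θ k ^ 4) * (c ^ 2 + 1 / 2) * hc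
  rw [surfInt_add hb0 (by fun_prop) (by fun_prop), hplus, hminus] at hsum
  simp only at hswap
  linarith

theorem surfInt_eq_sum_mul (hb0 : ∀ j, 0 < b j)
    {f : EuclideanSpace ℝ (Fin n) → ℝ} (hf : Continuous f) :
    surfInt n s b f = ∑ j, b j * surfInt n s b (fun θ => θ j ^ 2 * f θ) := by
  calc surfInt n s b f = surfInt n s b (fun θ => ∑ j, b j * (θ j ^ 2 * f θ)) :=
        surfInt_congr fun θ hθ => by
          have : qa n b θ * f θ = f θ := by rw [hθ, one_mul]
          simpa only [qa, Finset.sum_mul, mul_assoc] using this.symm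
    _ = ∑ j, b j * surfInt n s b (fun θ => θ j ^ 2 * f θ) := by
        rw [surfInt_sum _ hb0 fun j _ => by fun_prop]
        simp only [surfInt_const_mul]

end Moments

section WeightVector

variable {n : ℕ} {s a : ℝ} {i j k : Fin n}

theorem avec_apply_of_ne (hi : (i : ℕ) ≠ n - 1) : avec n a i = 1 := if_neg hi

theorem avec_apply_last (hn : 0 < n) : avec n a ⟨n - 1, by omega⟩ = a := if_pos rfl

theorem avec_pos (ha : 0 < a) (i : Fin n) : 0 < avec n a i := by
  unfold avec; split_ifs <;> positivity

theorem surfInt_avec_comp_apply (hi : (i : ℕ) ≠ n - 1) (hj : (j : ℕ) ≠ n - 1) (g : ℝ → ℝ) :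
    surfInt n s (avec n a) (fun θ => g (θ i)) = surfInt n s (avec n a) (fun θ => g (θ j)) :=
  surfInt_comp_apply_eq_of_eq (by rw [avec_apply_of_ne hi, avec_apply_of_ne hj]) g

theorem surfInt_avec_sq_mul_sq (ha : 0 < a) (hi : (i : ℕ) ≠ n - 1) (hk : (k : ℕ) ≠ n - 1)
    (hik : i ≠ k) (hj : (j : ℕ) ≠ n - 1) :
    surfInt n s (avec n a) (fun θ => θ i ^ 2 * θ k ^ 2) =
      1 / 3 * surfInt n s (avec n a) (fun θ => θ j ^ 4) := by
  rw [surfInt_sq_mul_sq_of_eq (avec_pos ha) hik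
    (by rw [avec_apply_of_ne hi, avec_apply_of_ne hk]), surfInt_avec_comp_apply hi hj (· ^ 4)]

theorem surfInt_avec_sq_mul_sq_last (ha : 0 < a) (hn : 0 < n) (hi : (i : ℕ) < n - 1)
    (hj : (j : ℕ) ≠ n - 1) :
    a * surfInt n s (avec n a) (fun θ => θ i ^ 2 * θ ⟨n - 1, by omega⟩ ^ 2) =
      surfInt n s (avec n a) (fun θ => θ j ^ 2) -
        ((n : ℝ) + 1) / 3 * surfInt n s (avec n a) (fun θ => θ j ^ 4) := by
  set N : Fin n := ⟨n - 1, by omega⟩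
  set I4 := surfInt n s (avec n a) (fun θ => θ j ^ 4)
  have hiN : (i : ℕ) ≠ n - 1 := hi.ne
  have hi_mem : i ∈ Finset.univ.erase N :=
    Finset.mem_erase.mpr ⟨Fin.ne_of_val_ne hiN, Finset.mem_univ i⟩
  have hsum := surfInt_eq_sum_mul (s := s) (avec_pos ha) (f := fun θ => θ i ^ 2) (by fun_prop)
  rw [← Finset.sum_erase_add _ _ (Finset.mem_univ N), avec_apply_last hn,
    surfInt_avec_comp_apply hiN hj (· ^ 2)] at hsum
  have hrest : ∑ l ∈ Finset.univ.erase N,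
      avec n a l * surfInt n s (avec n a) (fun θ => θ l ^ 2 * θ i ^ 2) =
        ∑ l ∈ Finset.univ.erase N, (1 / 3 * I4 + if l = i then 2 / 3 * I4 else 0) := by
    refine Finset.sum_congr rfl fun l hl => ?_
    have hlN : (l : ℕ) ≠ n - 1 := fun h => Finset.ne_of_mem_erase hl (Fin.ext h)
    rw [avec_apply_of_ne hlN, one_mul]
    split_ifs with hli
    · subst hli
      simp only [← pow_add, surfInt_avec_comp_apply hlN hj (· ^ 4)]
      ring
    · rw [surfInt_avec_sq_mul_sq ha hlN hiN hli hj]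
      ring
  have hcomm : surfInt n s (avec n a) (fun θ => θ N ^ 2 * θ i ^ 2) =
      surfInt n s (avec n a) (fun θ => θ i ^ 2 * θ N ^ 2) := by simp only [mul_comm]
  rw [hrest, Finset.sum_add_distrib, Finset.sum_const, Finset.card_erase_of_mem (Finset.mem_univ N),
    Finset.sum_ite_eq', if_pos hi_mem, Finset.card_univ, Fintype.card_fin, nsmul_eq_mul,
    Nat.cast_sub hn, hcomm] at hsum
  push_cast at hsum
  linarith

end WeightVector

/-- mixed moments on `∂E_a`:
`∫ θᵢ²θₖ² dμ = J₂⁽¹⁾/3` for `i ≠ k < n`, and `a ∫ θᵢ²θₙ² dμ = J₁⁽¹⁾ - (n+1)/3 J₂⁽¹⁾`. -/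
theorem statement19 (n : ℕ) (s a : ℝ) (hn : 2 ≤ n) (ha : 1 < a) :
    (∀ i k : Fin n, (i : ℕ) < n - 1 → (k : ℕ) < n - 1 → i ≠ k →
      surfInt n s (avec n a) (fun θ => θ i ^ 2 * θ k ^ 2) =
        1 / 3 * Jik n s (avec n a) 2 (⟨0, by omega⟩ : Fin n)) ∧
    ∀ i : Fin n, (i : ℕ) < n - 1 →
      a * surfInt n s (avec n a)
          (fun θ => θ i ^ 2 * θ (⟨n - 1, by omega⟩ : Fin n) ^ 2) =
        Jik n s (avec n a) 1 (⟨0, by omega⟩ : Fin n) -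
          ((n : ℝ) + 1) / 3 * Jik n s (avec n a) 2 (⟨0, by omega⟩ : Fin n) := by
  have ha0 : 0 < a := by linarith
  have hZ : ((⟨0, by omega⟩ : Fin n) : ℕ) ≠ n - 1 := by simp only; omega
  have hJ : ∀ m, Jik n s (avec n a) m ⟨0, by omega⟩ =
      surfInt n s (avec n a) (fun θ => θ ⟨0, by omega⟩ ^ (2 * m)) := by
    simp [Jik, avec_apply_of_ne hZ]
  refine ⟨fun i k hi hk hik => ?_, fun i hi => ?_⟩
  · rw [hJ, surfInt_avec_sq_mul_sq ha0 hi.ne hk.ne hik hZ]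
  · rw [hJ, hJ, surfInt_avec_sq_mul_sq_last ha0 (by omega) hi hZ]
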